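/- arXiv:math/0505390 — 2 statements merged into one kernel-verified Lean document; each statement's English description precedes it below -/
import Mathlib

section
/- Define F: (0,∞) → ℝ by F(λ) = λ^{-1}·f(λ), where f(λ) is the continued fraction 1/(a₁(λ) + 1/(a₂(λ) + 1/(a₃(λ) + ···))) with aₙ(λ) = (4/α)·((α²+n²)/(α²+n²−1))·λ for fixed α ∈ (1/2,1). Then F(λ) = λ^{-1} f(λ) is a strictly monotonically decreasing function of λ on (0,∞). Consequently the equation λ^{-1} f(λ) = 2α/(1−α²) has at most one solution λ > 0. -/
/-- The `N`-th truncation `1/(b₁ + 1/(b₂ + ··· + 1/b_N))` of a real continued fraction. -/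
noncomputable def cfTruncR (b : ℕ → ℝ) (N : ℕ) : ℝ :=
  (List.range N).reverse.foldl (fun acc i => (b (i + 1) + acc)⁻¹) 0

lemma cfTruncR_zero (b : ℕ → ℝ) : cfTruncR b 0 = 0 := rfl

lemma cfTruncR_succ (b : ℕ → ℝ) (N : ℕ) :
    cfTruncR b (N + 1) = (b 1 + cfTruncR (fun n => b (n + 1)) N)⁻¹ := by
  unfold cfTruncR
  rw [List.range_succ_eq_map, List.reverse_cons, List.foldl_append]
  simp only [List.foldl_cons, List.foldl_nil]
  rw [← List.map_reverse, List.foldl_map]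

lemma cfTruncR_nonneg : ∀ (N : ℕ) (b : ℕ → ℝ), (∀ n, 1 ≤ n → 0 < b n) →
    0 ≤ cfTruncR b N := by
  intro N
  induction N with
  | zero => intro b _; simp [cfTruncR_zero]
  | succ M ih =>
    intro b hb
    rw [cfTruncR_succ]
    have h1 : 0 < b 1 := hb 1 le_rfl
    have h2 : 0 ≤ cfTruncR (fun n => b (n + 1)) M :=
      ih _ (fun n hn => hb (n + 1) (by omega))
    positivity

lemma cfTruncR_le (b : ℕ → ℝ) (hb : ∀ n, 1 ≤ n → 0 < b n) (N : ℕ) :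
    cfTruncR b N ≤ (b 1)⁻¹ := by
  cases N with
  | zero =>
    simp only [cfTruncR_zero]
    have := hb 1 le_rfl
    positivity
  | succ M =>
    rw [cfTruncR_succ]
    have h1 : 0 < b 1 := hb 1 le_rfl
    have h2 : 0 ≤ cfTruncR (fun n => b (n + 1)) M :=
      cfTruncR_nonneg _ _ (fun n hn => hb (n + 1) (by omega))
    apply inv_anti₀ h1
    linarith

lemma cfTruncR_anti : ∀ (N : ℕ) (b c : ℕ → ℝ),
    (∀ n, 1 ≤ n → 0 < b n) → (∀ n, 1 ≤ n → 0 < c n) →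
    (∀ n, Odd n → b n ≤ c n) → (∀ n, Even n → c n ≤ b n) →
    cfTruncR c N ≤ cfTruncR b N := by
  intro N
  induction N with
  | zero => intro b c _ _ _ _; simp [cfTruncR_zero]
  | succ M ih =>
    intro b c hb hc hodd heven
    rw [cfTruncR_succ, cfTruncR_succ]
    have hb' : ∀ n, 1 ≤ n → 0 < (fun n => b (n + 1)) n := fun n hn => hb (n + 1) (by omega)
    have hc' : ∀ n, 1 ≤ n → 0 < (fun n => c (n + 1)) n := fun n hn => hc (n + 1) (by omega)
    have hX : cfTruncR (fun n => b (n + 1)) M ≤ cfTruncR (fun n => c (n + 1)) M := by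
      apply ih (fun n => c (n + 1)) (fun n => b (n + 1)) hc' hb'
      · intro n hn; exact heven (n + 1) (hn.add_one)
      · intro n hn; exact hodd (n + 1) (hn.add_one)
    have h1 : 0 < b 1 := hb 1 le_rfl
    have h2 : 0 ≤ cfTruncR (fun n => b (n + 1)) M := cfTruncR_nonneg _ _ hb'
    have h3 : b 1 ≤ c 1 := hodd 1 odd_one
    apply inv_anti₀ (by linarith)
    linarith

lemma cfTruncR_gap (b c : ℕ → ℝ)
    (hb : ∀ n, 1 ≤ n → 0 < b n) (hc : ∀ n, 1 ≤ n → 0 < c n)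
    (hodd : ∀ n, Odd n → b n ≤ c n) (heven : ∀ n, Even n → c n ≤ b n)
    (N : ℕ) (hN : 1 ≤ N) :
    cfTruncR c N + (c 1 - b 1) / ((b 1 + (c 2)⁻¹) * (c 1 + (c 2)⁻¹)) ≤ cfTruncR b N := by
  obtain ⟨M, rfl⟩ : ∃ M, N = M + 1 := ⟨N - 1, by omega⟩
  rw [cfTruncR_succ, cfTruncR_succ]
  have hb' : ∀ n, 1 ≤ n → 0 < (fun n => b (n + 1)) n := fun n hn => hb (n + 1) (by omega)
  have hc' : ∀ n, 1 ≤ n → 0 < (fun n => c (n + 1)) n := fun n hn => hc (n + 1) (by omega)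
  set X := cfTruncR (fun n => b (n + 1)) M with hXdef
  set Y := cfTruncR (fun n => c (n + 1)) M with hYdef
  have hXnn : 0 ≤ X := cfTruncR_nonneg _ _ hb'
  have hYnn : 0 ≤ Y := cfTruncR_nonneg _ _ hc'
  have hXY : X ≤ Y := by
    apply cfTruncR_anti M (fun n => c (n + 1)) (fun n => b (n + 1)) hc' hb'
    · intro n hn; exact heven (n + 1) (hn.add_one)
    · intro n hn; exact hodd (n + 1) (hn.add_one)
  have hc2 : 0 < c 2 := hc 2 (by omega)
  have hb2 : 0 < b 2 := hb 2 (by omega)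
  have hb2c2 : c 2 ≤ b 2 := heven 2 (by norm_num)
  have hXle : X ≤ (c 2)⁻¹ := by
    calc X ≤ (b 2)⁻¹ := cfTruncR_le _ hb' M
    _ ≤ (c 2)⁻¹ := inv_anti₀ hc2 hb2c2
  have hb1 : 0 < b 1 := hb 1 le_rfl
  have hc1 : 0 < c 1 := hc 1 le_rfl
  have h13 : b 1 ≤ c 1 := hodd 1 odd_one
  have hK : 0 < (c 2)⁻¹ := by positivity
  have step1 : (c 1 + Y)⁻¹ ≤ (c 1 + X)⁻¹ := inv_anti₀ (by linarith) (by linarith)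
  have key : (c 1 - b 1) / ((b 1 + (c 2)⁻¹) * (c 1 + (c 2)⁻¹)) ≤ (b 1 + X)⁻¹ - (c 1 + X)⁻¹ := by
    have heq : (b 1 + X)⁻¹ - (c 1 + X)⁻¹ = (c 1 - b 1) / ((b 1 + X) * (c 1 + X)) := by
      field_simp
      ring
    rw [heq]
    apply div_le_div_of_nonneg_left (by linarith) (by positivity)
    have : (b 1 + X) * (c 1 + X) ≤ (b 1 + (c 2)⁻¹) * (c 1 + (c 2)⁻¹) := by
      apply mul_le_mul (by linarith) (by linarith) (by linarith) (by linarith)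
    exact this
  linarith

/-- For fixed `α ∈ (1/2,1)`, the function `λ ↦ λ⁻¹ f(λ)`, written as the continued
fraction with odd partial denominators `(4/α)((α²+n²)/(α²+n²−1))λ²` (strictly
increasing in `λ`) and even partial denominators `(4/α)((α²+n²)/(α²+n²−1))`
(constant in `λ`), is strictly decreasing on `(0,∞)`; consequently the equation
`λ⁻¹ f(λ) = 2α/(1−α²)` has at most one solution `λ > 0`. -/
theorem stmt12 (α : ℝ) (hα1 : 1/2 < α) (hα2 : α < 1) (F : ℝ → ℝ)
    (hF : ∀ lam > (0:ℝ), Filter.Tendsto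
      (fun N => cfTruncR (fun n =>
        if Odd n then (4/α) * ((α^2 + n^2)/(α^2 + n^2 - 1)) * lam^2
        else (4/α) * ((α^2 + n^2)/(α^2 + n^2 - 1))) N)
      Filter.atTop (nhds (F lam))) :
    StrictAntiOn F (Set.Ioi 0) ∧
    ∀ lam ∈ Set.Ioi (0:ℝ), ∀ μ ∈ Set.Ioi (0:ℝ),
      F lam = 2*α/(1-α^2) → F μ = 2*α/(1-α^2) → lam = μ := by
  have hα0 : 0 < α := by linarith
  set b : ℝ → ℕ → ℝ := fun lam n =>
    if Odd n then (4/α) * ((α^2 + n^2)/(α^2 + n^2 - 1)) * lam^2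
    else (4/α) * ((α^2 + n^2)/(α^2 + n^2 - 1)) with hbdef
  have hCpos : ∀ n : ℕ, 1 ≤ n → 0 < (4/α) * ((α^2 + (n:ℝ)^2)/(α^2 + (n:ℝ)^2 - 1)) := by
    intro n hn
    have h1 : (1:ℝ) ≤ (n:ℝ) := by exact_mod_cast hn
    have h2 : (1:ℝ) ≤ (n:ℝ)^2 := by nlinarith
    have h3 : 0 < α^2 + (n:ℝ)^2 - 1 := by nlinarith
    have h4 : 0 < α^2 + (n:ℝ)^2 := by nlinarith
    positivity
  have hbpos : ∀ lam : ℝ, 0 < lam → ∀ n : ℕ, 1 ≤ n → 0 < b lam n := by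
    intro lam hlam n hn
    simp only [hbdef]
    split
    · exact mul_pos (hCpos n hn) (by positivity)
    · exact hCpos n hn
  have hanti : StrictAntiOn F (Set.Ioi 0) := by
    intro lam hlam μ hμ hlt
    simp only [Set.mem_Ioi] at hlam hμ
    -- b lam is "b", b μ is "c" in gap lemma
    have hodd : ∀ n : ℕ, Odd n → b lam n ≤ b μ n := by
      intro n hn
      simp only [hbdef, if_pos hn]
      have hsq : lam^2 ≤ μ^2 := by nlinarith
      have hC := hCpos n (by rcases hn with ⟨k, rfl⟩; omega)
      nlinarith
    have heven : ∀ n : ℕ, Even n → b μ n ≤ b lam n := by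
      intro n hn
      have hno : ¬ Odd n := Nat.not_odd_iff_even.mpr hn
      simp only [hbdef]
      simp only [if_neg hno]
      exact le_rfl
    set δ : ℝ := (b μ 1 - b lam 1) / ((b lam 1 + (b μ 2)⁻¹) * (b μ 1 + (b μ 2)⁻¹)) with hδ
    have hδpos : 0 < δ := by
      have h1 : 0 < b lam 1 := hbpos lam hlam 1 le_rfl
      have h2 : 0 < b μ 1 := hbpos μ hμ 1 le_rfl
      have h3 : 0 < b μ 2 := hbpos μ hμ 2 (by omega)
      have h4 : b lam 1 < b μ 1 := by
        simp only [hbdef, if_pos (odd_one)]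
        have hC := hCpos 1 le_rfl
        have hsq : lam^2 < μ^2 := by nlinarith
        push_cast
        nlinarith
      have h5 : 0 < (b μ 2)⁻¹ := by positivity
      apply div_pos (by linarith) (by positivity)
    have hgap : ∀ N : ℕ, 1 ≤ N → cfTruncR (b μ) N + δ ≤ cfTruncR (b lam) N :=
      fun N hN => cfTruncR_gap (b lam) (b μ) (hbpos lam hlam) (hbpos μ hμ) hodd heven N hN
    have hlim1 : Filter.Tendsto (fun N => cfTruncR (b lam) N) Filter.atTop (nhds (F lam)) :=
      hF lam hlam
    have hlim2 : Filter.Tendsto (fun N => cfTruncR (b μ) N + δ) Filter.atTop (nhds (F μ + δ)) :=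
      (hF μ hμ).add tendsto_const_nhds
    have : F μ + δ ≤ F lam := by
      apply le_of_tendsto_of_tendsto hlim2 hlim1
      filter_upwards [Filter.eventually_ge_atTop 1] with N hN
      exact hgap N hN
    linarith
  refine ⟨hanti, ?_⟩
  intro lam hlam μ hμ h1 h2
  exact hanti.injOn hlam hμ (by rw [h1, h2])
end

section
/- Let λ ∈ ℂ satisfy Re{ a₁ + 1/(a₀ + i) } < 0 where a₀ = −8(λ+ν), a₁ = (40/3)(λ+5ν), ν ≥ 0, and Re λ ≥ −ν. Then −ν < Re λ < (1/4)√(3/20 + (8ν)²) − 2ν and (1/8)(1 − √(3/5)) < Im λ < (1/8)(1 + √(3/5)). -/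
open Complex

lemma key (ν x y : ℝ) (hν : 0 ≤ ν) (hx : -ν ≤ x)
    (h : 40/3*(x+5*ν) + (-8*(x+ν))/((-8*(x+ν))^2 + (1-8*y)^2) < 0) :
    -ν < x ∧ x < (1/4)*Real.sqrt (3/20 + (8*ν)^2) - 2*ν ∧
    (1/8)*(1 - Real.sqrt (3/5)) < y ∧ y < (1/8)*(1 + Real.sqrt (3/5)) := by
  set D : ℝ := (-8*(x+ν))^2 + (1-8*y)^2 with hD
  have hD0 : 0 ≤ D := by positivity
  have hDpos : 0 < D := by
    rcases hD0.lt_or_eq with h1 | h1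
    · exact h1
    · exfalso
      have h2 : (-8*(x+ν))^2 = 0 ∧ (1-8*y)^2 = 0 := by
        constructor <;> nlinarith [sq_nonneg (-8*(x+ν)), sq_nonneg (1-8*y)]
      have h3 : x + ν = 0 := by nlinarith [h2.1]
      rw [← h1] at h
      simp at h
      nlinarith
  -- clear denominator
  have h2 : -8*(x+ν) < -(40/3*(x+5*ν)) * D := by
    have h' : (-8*(x+ν))/D < -(40/3*(x+5*ν)) := by linarith
    exact (div_lt_iff₀ hDpos).mp h'
  -- x + ν > 0
  have hu : 0 < x + ν := by
    rcases (by linarith : (0:ℝ) ≤ x + ν).lt_or_eq with h1 | h1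
    · exact h1
    · exfalso; nlinarith
  refine ⟨by linarith, ?_, ?_, ?_⟩
  · -- upper bound on x
    have ht0 : 0 ≤ Real.sqrt (3/20 + (8*ν)^2) := Real.sqrt_nonneg _
    have ht : Real.sqrt (3/20 + (8*ν)^2)^2 = 3/20 + (8*ν)^2 :=
      Real.sq_sqrt (by positivity)
    -- from h2 and D ≥ 64(x+ν)^2
    have hq : (x+ν)^2 + 4*ν*(x+ν) < 3/320 := by
      nlinarith [sq_nonneg (1-8*y), mul_pos hu hu, mul_pos (mul_pos hu hu) hu]
    nlinarith [sq_nonneg (x + 3*ν - Real.sqrt (3/20 + (8*ν)^2)/4)]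
  all_goals {
    have hs0 : 0 ≤ Real.sqrt (3/5) := Real.sqrt_nonneg _
    have hs : Real.sqrt (3/5)^2 = 3/5 := Real.sq_sqrt (by norm_num)
    have hD5 : (1-8*y)^2 < 3/5 := by nlinarith [sq_nonneg (x+ν), mul_pos hu hu]
    nlinarith [sq_nonneg (1-8*y - Real.sqrt (3/5)), sq_nonneg (1-8*y + Real.sqrt (3/5))]
  }

/-- Localization of the unstable eigenvalue in Case 4 of Example 2: if
`Re λ ≥ −ν` and `Re{a₁ + 1/(a₀ + i)} < 0` with `a₀ = −8(λ+ν)`,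
`a₁ = (40/3)(λ+5ν)`, then `−ν < Re λ < (1/4)√(3/20 + (8ν)²) − 2ν` and
`(1/8)(1 − √(3/5)) < Im λ < (1/8)(1 + √(3/5))`. -/
theorem stmt17 (ν : ℝ) (hν : 0 ≤ ν) (lam : ℂ) (hre : -ν ≤ lam.re)
    (h : ((40/3)*(lam + 5*(ν:ℂ)) + (-8*(lam + (ν:ℂ)) + I)⁻¹).re < 0) :
    -ν < lam.re ∧ lam.re < (1/4)*Real.sqrt (3/20 + (8*ν)^2) - 2*ν ∧
    (1/8)*(1 - Real.sqrt (3/5)) < lam.im ∧ lam.im < (1/8)*(1 + Real.sqrt (3/5)) := by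
  apply key ν lam.re lam.im hν hre
  have hz : ((40/3)*(lam + 5*(ν:ℂ)) + (-8*(lam + (ν:ℂ)) + I)⁻¹).re
      = 40/3*(lam.re+5*ν) + (-8*(lam.re+ν))/((-8*(lam.re+ν))^2 + (1-8*lam.im)^2) := by
    rw [Complex.add_re, Complex.inv_re]
    simp [Complex.normSq_apply, Complex.add_re, Complex.add_im, Complex.mul_re, Complex.mul_im]
    ring_nf
  rwa [hz] at h
end
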